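/- arXiv:2310.09857 — 2 statements merged into one kernel-verified Lean document; each statement's English description precedes it below -/
import Mathlib

section
/- Let R be a non-periodic double ray and let v* be a vertex such that the ray Rv* is non-periodic. If v ≥_R v* and w <_R v are vertices with Rv isomorphic to Rw as digraphs, then restricting the isomorphism yields a non-trivial order-preserving endomorphism of Rv*, a contradiction; hence no such w exists. -/
/-- A copy of the digraph `H` in the digraph `D`: an injective arc-preserving map. -/
structure DCopy {V W : Type} (H : Digraph V) (D : Digraph W) where
  toFun : V → W
  inj : Function.Injective toFun
  adj : ∀ u v : V, H.Adj u v → D.Adj (toFun u) (toFun v)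

/-- Two copies are vertex-disjoint if their images are disjoint. -/
def DCopy.VDisjoint {V W : Type} {H : Digraph V} {D : Digraph W}
    (c₁ c₂ : DCopy H D) : Prop :=
  ∀ u v : V, c₁.toFun u ≠ c₂.toFun v

/-- `D` contains arbitrarily many pairwise vertex-disjoint copies of `H`. -/
def ManyDisjointCopies {V W : Type} (H : Digraph V) (D : Digraph W) : Prop :=
  ∀ k : ℕ, ∃ f : Fin k → DCopy H D, ∀ i j : Fin k, i ≠ j → (f i).VDisjoint (f j)

/-- `D` contains infinitely many pairwise vertex-disjoint copies of `H`. -/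
def InfDisjointCopies {V W : Type} (H : Digraph V) (D : Digraph W) : Prop :=
  ∃ f : ℕ → DCopy H D, ∀ i j : ℕ, i ≠ j → (f i).VDisjoint (f j)

/-- A digraph `H` is ubiquitous if every digraph containing arbitrarily many
pairwise disjoint copies of `H` contains infinitely many. -/
def Ubiquitous {V : Type} (H : Digraph V) : Prop :=
  ∀ (W : Type) (D : Digraph W), ManyDisjointCopies H D → InfDisjointCopies H D

/-- The oriented double ray on `ℤ` determined by the orientation function `o`:
`o n = true` means the arc between `n` and `n+1` points from `n` to `n+1`. -/
def doubleRay (o : ℤ → Bool) : Digraph ℤ where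
  Adj u v := (v = u + 1 ∧ o u = true) ∨ (u = v + 1 ∧ o v = false)

/-- A turn of the double ray: a vertex of in-degree 2 or out-degree 2. -/
def IsTurn (o : ℤ → Bool) (n : ℤ) : Prop := o (n - 1) ≠ o n

/-- The oriented ray on `ℕ` determined by the orientation function `r`:
`r i = true` means the arc between `i` and `i+1` points from `i` to `i+1`
(away from the root `0`). -/
def rayD (r : ℕ → Bool) : Digraph ℕ where
  Adj u v := (v = u + 1 ∧ r u = true) ∨ (u = v + 1 ∧ r v = false)

/-- The backward tail `Rv` of the double ray, as a ray rooted at `v`: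
index `i` corresponds to the vertex `v - i`. -/
def backTail (o : ℤ → Bool) (v : ℤ) : ℕ → Bool := fun i => !o (v - i - 1)

/-- The forward tail `vR` of the double ray, as a ray rooted at `v`:
index `i` corresponds to the vertex `v + i`. -/
def fwdTail (o : ℤ → Bool) (v : ℤ) : ℕ → Bool := fun i => o (v + i)

/-- A digraph homomorphism (endomorphism) of the ray `rayD r`. -/
def IsRayHom (r : ℕ → Bool) (f : ℕ → ℕ) : Prop :=
  ∀ u v : ℕ, (rayD r).Adj u v → (rayD r).Adj (f u) (f v)

/-- A ray is periodic if it has a non-trivial order-preserving endomorphism. -/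
def RayPeriodic (r : ℕ → Bool) : Prop :=
  ∃ f : ℕ → ℕ, IsRayHom r f ∧ Monotone f ∧ f ≠ id

/-- `p` is the periodicity of the ray `rayD r`: the least distance `d(v, f v)`
over all vertices `v` and non-trivial order-preserving endomorphisms `f`. -/
def RayPeriodicity (r : ℕ → Bool) (p : ℕ) : Prop :=
  IsLeast {d : ℕ | ∃ f : ℕ → ℕ, IsRayHom r f ∧ Monotone f ∧ f ≠ id ∧
    ∃ v : ℕ, Nat.dist (f v) v = d} p

/-- A digraph homomorphism (endomorphism) of the double ray `doubleRay o`. -/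
def IsDRayHom (o : ℤ → Bool) (f : ℤ → ℤ) : Prop :=
  ∀ u v : ℤ, (doubleRay o).Adj u v → (doubleRay o).Adj (f u) (f v)

/-- A double ray is periodic if it has a non-trivial order-preserving endomorphism. -/
def DRayPeriodic (o : ℤ → Bool) : Prop :=
  ∃ f : ℤ → ℤ, IsDRayHom o f ∧ Monotone f ∧ f ≠ id

/-- `p` is the periodicity of the double ray `doubleRay o`. -/
def DRayPeriodicity (o : ℤ → Bool) (p : ℕ) : Prop :=
  IsLeast {d : ℕ | ∃ f : ℤ → ℤ, IsDRayHom o f ∧ Monotone f ∧ f ≠ id ∧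
    ∃ v : ℤ, (f v - v).natAbs = d} p

/-- The rays `rayD r` and `rayD r'` are isomorphic as digraphs. -/
def RayIso (r r' : ℕ → Bool) : Prop :=
  ∃ φ : ℕ ≃ ℕ, ∀ u v : ℕ, (rayD r).Adj u v ↔ (rayD r').Adj (φ u) (φ v)

/-- The ray `rayD r` is isomorphic to a subdigraph of the ray `rayD r'`. -/
def RayLE (r r' : ℕ → Bool) : Prop :=
  ∃ f : ℕ → ℕ, Function.Injective f ∧
    ∀ u v : ℕ, (rayD r).Adj u v → (rayD r').Adj (f u) (f v)

/-- An in-ray: every arc points towards the root. -/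
def IsInRay (r : ℕ → Bool) : Prop := ∀ i : ℕ, r i = false

/-- An out-ray: every arc points away from the root. -/
def IsOutRay (r : ℕ → Bool) : Prop := ∀ i : ℕ, r i = true

lemma rayIso_eq {r r' : ℕ → Bool} (hiso : RayIso r r') : ∀ i, r i = r' i := by
  obtain ⟨φ, h⟩ := hiso
  simp only [rayD] at h
  have key : ∀ u v : ℕ, (v = u + 1 ∨ u = v + 1) ↔ (φ v = φ u + 1 ∨ φ u = φ v + 1) := by
    intro u v
    constructor
    · rintro (rfl | rfl)
      · cases hr : r u
        · rcases (h (u+1) u).mp (Or.inr ⟨rfl, hr⟩) with ⟨h1, _⟩ | ⟨h1, _⟩ <;> omega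
        · rcases (h u (u+1)).mp (Or.inl ⟨rfl, hr⟩) with ⟨h1, _⟩ | ⟨h1, _⟩ <;> omega
      · cases hr : r v
        · rcases (h (v+1) v).mp (Or.inr ⟨rfl, hr⟩) with ⟨h1, _⟩ | ⟨h1, _⟩ <;> omega
        · rcases (h v (v+1)).mp (Or.inl ⟨rfl, hr⟩) with ⟨h1, _⟩ | ⟨h1, _⟩ <;> omega
    · rintro (hN | hN)
      · cases hr : r' (φ u)
        · rcases (h v u).mpr (Or.inr ⟨hN, hr⟩) with ⟨h1, _⟩ | ⟨h1, _⟩ <;> omega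
        · rcases (h u v).mpr (Or.inl ⟨hN, hr⟩) with ⟨h1, _⟩ | ⟨h1, _⟩ <;> omega
      · cases hr : r' (φ v)
        · rcases (h u v).mpr (Or.inr ⟨hN, hr⟩) with ⟨h1, _⟩ | ⟨h1, _⟩ <;> omega
        · rcases (h v u).mpr (Or.inl ⟨hN, hr⟩) with ⟨h1, _⟩ | ⟨h1, _⟩ <;> omega
  have hid : ∀ n, φ n = n := by
    intro n
    induction n using Nat.strong_induction_on with
    | _ n ih =>
      match n with
      | 0 =>
        by_contra h0
        have hm : 1 ≤ φ 0 := Nat.one_le_iff_ne_zero.mpr h0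
        set m := φ 0 with hmdef
        have k1 : φ.symm (m - 1) = 1 := by
          have := (key (φ.symm (m - 1)) 0).mpr (by
            rw [Equiv.apply_symm_apply]
            omega)
          omega
        have k2 : φ.symm (m + 1) = 1 := by
          have := (key 0 (φ.symm (m + 1))).mpr (by
            rw [Equiv.apply_symm_apply]
            omega)
          omega
        have : m - 1 = m + 1 := φ.symm.injective (k1.trans k2.symm)
        omega
      | (m+1) =>
        have hm : φ m = m := ih m (by omega)
        have := (key m (m+1)).mp (Or.inl rfl)
        rw [hm] at this
        match m, ih, this with
        | 0, ih, this => omega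
        | (k+1), ih, this =>
          have hk : φ k = k := ih k (by omega)
          rcases this with h1 | h1
          · exact h1
          · exfalso
            have h2 : φ (k + 1 + 1) = φ k := by omega
            have := φ.injective h2
            omega
  intro i
  cases hr : r i
  · rcases (h (i+1) i).mp (Or.inr ⟨rfl, hr⟩) with ⟨h1, _⟩ | ⟨h1, h2⟩
    · rw [hid, hid] at h1; omega
    · rw [hid] at h2; exact h2.symm
  · rcases (h i (i+1)).mp (Or.inl ⟨rfl, hr⟩) with ⟨h1, h2⟩ | ⟨h1, _⟩
    · rw [hid] at h2; exact h2.symm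
    · rw [hid, hid] at h1; omega

/-- if `R` is a non-periodic double ray and `Rv*` is non-periodic,
then for `v ≥ v*` there is no `w < v` with `Rv ≅ Rw`. -/
theorem no_smaller_isomorphic_backTail (o : ℤ → Bool) (vstar : ℤ)
    (hR : ¬ DRayPeriodic o)
    (hv : ¬ RayPeriodic (backTail o vstar)) :
    ∀ v : ℤ, vstar ≤ v → ∀ w : ℤ, w < v →
      ¬ RayIso (backTail o v) (backTail o w) := by
  intro v hvv w hwv hiso
  have heq := rayIso_eq hiso
  simp only [backTail, Bool.not_inj_iff] at heq
  set d : ℕ := (v - w).toNat with hd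
  have hdpos : 0 < d := by omega
  have hdz : (d : ℤ) = v - w := by omega
  have key2 : ∀ i : ℕ, o (vstar - i - 1) = o (vstar - i - 1 - d) := by
    intro i
    obtain ⟨j, hjz⟩ : ∃ j : ℕ, (j : ℤ) = (v - vstar) + i :=
      ⟨((v - vstar).toNat + i), by push_cast; omega⟩
    have hj := heq j
    have e1 : v - (j : ℤ) - 1 = vstar - i - 1 := by omega
    have e2 : w - (j : ℤ) - 1 = vstar - i - 1 - d := by omega
    rw [e1, e2] at hj
    exact hj
  have hrr : ∀ i : ℕ, backTail o vstar (i + d) = backTail o vstar i := by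
    intro i
    show (!o (vstar - ((i + d : ℕ) : ℤ) - 1)) = (!o (vstar - (i : ℤ) - 1))
    have e : vstar - ((i + d : ℕ) : ℤ) - 1 = vstar - (i : ℤ) - 1 - d := by
      push_cast; ring
    rw [e, ← key2 i]
  apply hv
  refine ⟨fun i => i + d, ?_, fun a b hab => by simpa using hab, ?_⟩
  · intro a b hab
    simp only [rayD] at hab ⊢
    rcases hab with ⟨h1, h2⟩ | ⟨h1, h2⟩
    · exact Or.inl ⟨by omega, by rw [hrr]; exact h2⟩
    · exact Or.inr ⟨by omega, by rw [hrr]; exact h2⟩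
  · intro hid
    have := congrFun hid 0
    simp only [id] at this
    omega
end

section
/- Let R be a non-periodic double ray and v̂ a vertex such that Rv̂ ≅ α(v̂)R for a unique vertex α(v̂) with α(v̂) <_R v̂, and such that Rv̂ ≅ Rw implies v̂ = w for all w. Then any isomorphism ψ from Rv̂ to α(v̂)R maps α(v̂) to v̂, and ψ restricts to an isomorphism from Rα(v̂) to v̂R; in particular v̂R ≅ Rα(v̂). -/
lemma sadj_iff (r : ℕ → Bool) (u v : ℕ) :
    ((rayD r).Adj u v ∨ (rayD r).Adj v u) ↔ (v = u + 1 ∨ u = v + 1) := by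
  unfold rayD
  cases h : r u <;> cases h' : r v <;> simp_all <;> omega

lemma iso_id {r r' : ℕ → Bool} (φ : ℕ ≃ ℕ)
    (h : ∀ u v : ℕ, (rayD r).Adj u v ↔ (rayD r').Adj (φ u) (φ v)) :
    ∀ n : ℕ, φ n = n := by
  have hs : ∀ u v : ℕ, (v = u + 1 ∨ u = v + 1) ↔ (φ v = φ u + 1 ∨ φ u = φ v + 1) := by
    intro u v
    rw [← sadj_iff r u v, ← sadj_iff r' (φ u) (φ v), h u v, h v u]
  have h0 : φ 0 = 0 := by
    by_contra h0
    obtain ⟨m, hm⟩ : ∃ m, φ 0 = m + 1 := ⟨φ 0 - 1, by omega⟩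
    have h1 : φ (φ.symm m) = m := φ.apply_symm_apply m
    have h2 : φ (φ.symm (m + 2)) = m + 2 := φ.apply_symm_apply (m + 2)
    have e1 : φ.symm m = 1 := by
      have := (hs 0 (φ.symm m)).mpr (Or.inr (by rw [h1, hm]))
      omega
    have e2 : φ.symm (m + 2) = 1 := by
      have := (hs 0 (φ.symm (m + 2))).mpr (Or.inl (by rw [h2, hm]))
      omega
    have := φ.symm.injective (e1.trans e2.symm)
    omega
  have h1 : φ 1 = 1 := by
    have := (hs 0 1).mp (Or.inl rfl)
    omega
  have key : ∀ n : ℕ, φ n = n ∧ φ (n + 1) = n + 1 := by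
    intro n
    induction n with
    | zero => exact ⟨h0, h1⟩
    | succ k ih =>
      refine ⟨ih.2, ?_⟩
      have hk := (hs (k + 1) (k + 2)).mp (Or.inl rfl)
      rw [ih.2] at hk
      rcases hk with h' | h'
      · exact h'
      · have hc : φ (k + 2) = k := by omega
        have := φ.injective (hc.trans ih.1.symm)
        omega
  exact fun n => (key n).1

lemma ray_eq {r r' : ℕ → Bool} (φ : ℕ ≃ ℕ)
    (h : ∀ u v : ℕ, (rayD r).Adj u v ↔ (rayD r').Adj (φ u) (φ v)) :
    ∀ i : ℕ, r i = r' i := by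
  intro i
  have hid := iso_id φ h
  have := h i (i + 1)
  rw [hid i, hid (i + 1)] at this
  unfold rayD at this
  have hne : ¬ (i = i + 1 + 1) := by omega
  cases hr : r i <;> cases hr' : r' i <;>
    simp [hr, hr', hne] at this ⊢

/-- let `R` be a non-periodic double ray and `v̂` a vertex with
`Rv̂ ≅ aR` for a unique vertex `a = α(v̂)` with `a < v̂`, such that `Rv̂ ≅ Rw`
implies `v̂ = w`.  Then every isomorphism `ψ : Rv̂ → aR` maps the vertex `a`
(which has index `(v̂ - a).toNat` in the ray `Rv̂`) to the vertex `v̂` (which has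
the same index in the ray `aR`), and `ψ` restricts to an isomorphism
`Ra → v̂R`; in particular `v̂R ≅ Ra`. -/
theorem iso_maps_alpha_to_vhat (o : ℤ → Bool) (vhat a : ℤ)
    (hR : ¬ DRayPeriodic o)
    (hlt : a < vhat)
    (hiso : RayIso (backTail o vhat) (fwdTail o a))
    (huniqa : ∀ a' : ℤ, RayIso (backTail o vhat) (fwdTail o a') → a' = a)
    (huniqw : ∀ w : ℤ, RayIso (backTail o vhat) (backTail o w) → vhat = w) :
    (∀ φ : ℕ ≃ ℕ,
      (∀ u v : ℕ, (rayD (backTail o vhat)).Adj u v ↔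
        (rayD (fwdTail o a)).Adj (φ u) (φ v)) →
      φ ((vhat - a).toNat) = (vhat - a).toNat) ∧
    RayIso (fwdTail o vhat) (backTail o a) := by
  obtain ⟨φ, hφ⟩ := hiso
  refine ⟨fun ψ hψ => iso_id ψ hψ _, ?_⟩
  have heq : ∀ i : ℕ, backTail o vhat i = fwdTail o a i := ray_eq φ hφ
  have key : ∀ j : ℕ, fwdTail o vhat j = backTail o a j := by
    intro j
    have hthis := heq ((vhat - a).toNat + j)
    unfold backTail fwdTail at hthis ⊢
    have e1 : (vhat : ℤ) - (((vhat - a).toNat + j : ℕ) : ℤ) - 1 = a - j - 1 := by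
      push_cast; omega
    have e2 : (a : ℤ) + (((vhat - a).toNat + j : ℕ) : ℤ) = vhat + j := by
      push_cast; omega
    rw [e1, e2] at hthis
    exact hthis.symm
  exact ⟨Equiv.refl ℕ, fun u v => by
    rw [show fwdTail o vhat = backTail o a from funext key]
    exact Iff.rfl⟩
end
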